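/- An aperiodic bi-infinite word x over {0,1} satisfies span(x) = 1 if and only if there exists k ∈ ℤ such that S^k(x) is a characteristic Sturmian word. -/

import Mathlib

open scoped ENat Classical

/-- The length-`n` factor of the bi-infinite word `x` starting at position `i`. -/
def subwordZ {A : Type*} (x : ℤ → A) (i : ℤ) (n : ℕ) : List A :=
  (List.range n).map fun j => x (i + (j : ℤ))

/-- `w` occurs in `x` at position `i`. -/
def occursAt {A : Type*} (x : ℤ → A) (w : List A) (i : ℤ) : Prop :=
  subwordZ x i w.length = w

/-- `w` is a factor of the bi-infinite word `x`. -/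
def IsFactorZ {A : Type*} (x : ℤ → A) (w : List A) : Prop :=
  ∃ i : ℤ, occursAt x w i

/-- `Γ` is a string attractor of the bi-infinite word `x`: every nonempty factor
has an occurrence crossing a position of `Γ`. -/
def IsAttractorZ {A : Type*} (x : ℤ → A) (Γ : Set ℤ) : Prop :=
  ∀ w : List A, w ≠ [] → IsFactorZ x w →
    ∃ i : ℤ, occursAt x w i ∧ ∃ p ∈ Γ, i ≤ p ∧ p < i + (w.length : ℤ)

/-- The span `sup Γ - inf Γ` of a set of integers (`⊤` when unbounded). -/
noncomputable def setSpan (Γ : Set ℤ) : ℕ∞ :=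
  ⨆ a ∈ Γ, ⨆ b ∈ Γ, ((b - a).toNat : ℕ∞)

/-- The string attractor span of a bi-infinite word. -/
noncomputable def wordSpan {A : Type*} (x : ℤ → A) : ℕ∞ :=
  ⨅ Γ ∈ {Γ : Set ℤ | IsAttractorZ x Γ}, setSpan Γ

/-- The factor complexity of a bi-infinite word. -/
noncomputable def complexityZ {A : Type*} (x : ℤ → A) (n : ℕ) : ℕ :=
  Nat.card {w : List A // w.length = n ∧ IsFactorZ x w}

/-- The shift `S^k`. -/
def shiftZ {A : Type*} (k : ℤ) (x : ℤ → A) : ℤ → A := fun i => x (i + k)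

def PositivelyPeriodicZ {A : Type*} (x : ℤ → A) : Prop :=
  ∃ (N : ℤ) (p : ℕ), 1 ≤ p ∧ ∀ n : ℤ, N ≤ n → x n = x (n + (p : ℤ))

def NegativelyPeriodicZ {A : Type*} (x : ℤ → A) : Prop :=
  ∃ (N : ℤ) (p : ℕ), 1 ≤ p ∧ ∀ n : ℤ, n ≤ N → x n = x (n - (p : ℤ))

def EventuallyPeriodicZ {A : Type*} (x : ℤ → A) : Prop :=
  PositivelyPeriodicZ x ∨ NegativelyPeriodicZ x

def AperiodicZ {A : Type*} (x : ℤ → A) : Prop := ¬ EventuallyPeriodicZ x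

def PurelyPeriodicZ {A : Type*} (x : ℤ → A) : Prop :=
  ∃ p : ℕ, 1 ≤ p ∧ ∀ n : ℤ, x n = x (n + (p : ℤ))

def LeftSpecialZ {A : Type*} (x : ℤ → A) (u : List A) : Prop :=
  ∃ a b : A, a ≠ b ∧ IsFactorZ x (a :: u) ∧ IsFactorZ x (b :: u)

def RightSpecialZ {A : Type*} (x : ℤ → A) (u : List A) : Prop :=
  ∃ a b : A, a ≠ b ∧ IsFactorZ x (u ++ [a]) ∧ IsFactorZ x (u ++ [b])

def BispecialZ {A : Type*} (x : ℤ → A) (u : List A) : Prop :=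
  LeftSpecialZ x u ∧ RightSpecialZ x u

/-- A bi-infinite word over `{0,1}` is Sturmian if it is aperiodic with complexity `n + 1`. -/
def SturmianZ (x : ℤ → Fin 2) : Prop :=
  AperiodicZ x ∧ ∀ n : ℕ, complexityZ x n = n + 1

/-- `x_{[-n, n+1]} = r_n(x) 01 l_n(x)` for all `n`. -/
def UpperCharacteristic (x : ℤ → Fin 2) : Prop :=
  SturmianZ x ∧ ∀ n : ℕ, ∃ r l : List (Fin 2),
    r.length = n ∧ RightSpecialZ x r ∧ l.length = n ∧ LeftSpecialZ x l ∧
    subwordZ x (-(n : ℤ)) (2 * n + 2) = r ++ [0, 1] ++ l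

/-- `x_{[-n, n+1]} = r_n(x) 10 l_n(x)` for all `n`. -/
def LowerCharacteristic (x : ℤ → Fin 2) : Prop :=
  SturmianZ x ∧ ∀ n : ℕ, ∃ r l : List (Fin 2),
    r.length = n ∧ RightSpecialZ x r ∧ l.length = n ∧ LeftSpecialZ x l ∧
    subwordZ x (-(n : ℤ)) (2 * n + 2) = r ++ [1, 0] ++ l

def CharacteristicSturmian (x : ℤ → Fin 2) : Prop :=
  UpperCharacteristic x ∨ LowerCharacteristic x

def QuasiSturmianZ {A : Type*} (x : ℤ → A) : Prop :=
  AperiodicZ x ∧ ∃ (n₀ k : ℕ), 1 ≤ k ∧ ∀ n : ℕ, n₀ ≤ n → complexityZ x n = n + k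

/-- Starting position in `φ(x)` of the image `φ(x_i)` (image of `x_0` starts at `0`). -/
def blockStart {A B : Type*} (φ : A → List B) (x : ℤ → A) (i : ℤ) : ℤ :=
  if 0 ≤ i then ((List.range i.toNat).map fun j => ((φ (x (j : ℤ))).length : ℤ)).sum
  else -((List.range (-i).toNat).map fun j => ((φ (x (-(j : ℤ) - 1))).length : ℤ)).sum

/-- `y` is the image of the bi-infinite word `x` under the substitution `φ`
(with images of letters nonempty). -/
def IsSubstImage {A B : Type*} (φ : A → List B) (x : ℤ → A) (y : ℤ → B) : Prop :=
  (∀ a : A, φ a ≠ []) ∧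
  ∀ i : ℤ, subwordZ y (blockStart φ x i) (φ (x i)).length = φ (x i)

/-- `φ_x(Γ)`: positions of `φ(x)` occupied by images of letters at positions in `Γ`. -/
def substSupp {A B : Type*} (φ : A → List B) (x : ℤ → A) (Γ : Set ℤ) : Set ℤ :=
  {n : ℤ | ∃ i ∈ Γ, blockStart φ x i ≤ n ∧ n < blockStart φ x i + ((φ (x i)).length : ℤ)}

/-- `φ_x^{-1}(Γ)`: positions of letters of `x` whose image blocks in `φ(x)` meet `Γ`. -/
def substPreimage {A B : Type*} (φ : A → List B) (x : ℤ → A) (Γ : Set ℤ) : Set ℤ :=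
  {i : ℤ | ∃ n ∈ Γ, blockStart φ x i ≤ n ∧ n < blockStart φ x i + ((φ (x i)).length : ℤ)}

/-- The set of occurrences of `w` in the finite word `u`. -/
def occSetF {B : Type*} (u w : List B) : Set ℕ :=
  {i : ℕ | i + w.length ≤ u.length ∧ (u.drop i).take w.length = w}

/-- `φ` is a return morphism for `w`. -/
def IsReturnMorphism {A B : Type*} (φ : A → List B) (w : List B) : Prop :=
  w ≠ [] ∧ Function.Injective φ ∧ (∀ a : A, φ a ≠ []) ∧
  ∀ a : A, occSetF (w ++ φ a) w = {0, (φ a).length}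

def listPow {A : Type*} (u : List A) : ℕ → List A
  | 0 => []
  | n + 1 => u ++ listPow u n

/-- A substitution on `{0,1}` is acyclic if `φ(0)` and `φ(1)` are not powers of one word. -/
def AcyclicSubst {A : Type*} (φ : Fin 2 → List A) : Prop :=
  ¬ ∃ (u : List A) (m n : ℕ), φ 0 = listPow u m ∧ φ 1 = listPow u n

/-- The substitution `L₀ : 0 ↦ 0, 1 ↦ 01`. -/
def Lzero : Fin 2 → List (Fin 2) := fun a => if a = 0 then [0] else [0, 1]

/-- The substitution `L₁ : 0 ↦ 10, 1 ↦ 1`. -/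
def Lone : Fin 2 → List (Fin 2) := fun a => if a = 0 then [1, 0] else [1]

/-- A finite word has period `r`. -/
def PeriodicF {A : Type*} (w : List A) (r : ℕ) : Prop :=
  ∀ i : ℕ, i + r < w.length → w[i]? = w[i + r]?

/-- `Γ` is a string attractor of the finite word `w`. -/
def IsAttractorF {A : Type*} (w : List A) (Γ : Set ℕ) : Prop :=
  ∀ u : List A, u ≠ [] → u <:+: w →
    ∃ i : ℕ, i + u.length ≤ w.length ∧ (w.drop i).take u.length = u ∧
      ∃ p ∈ Γ, i ≤ p ∧ p < i + u.length

def RecurrentZ {A : Type*} (x : ℤ → A) : Prop :=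
  ∀ w : List A, IsFactorZ x w → {i : ℤ | occursAt x w i}.Infinite

def UniformlyRecurrentZ {A : Type*} (x : ℤ → A) : Prop :=
  ∀ w : List A, IsFactorZ x w →
    ∃ n : ℕ, ∀ i : ℤ, ∃ j : ℤ, i ≤ j ∧ j + (w.length : ℤ) ≤ i + (n : ℤ) ∧ occursAt x w j

def ModuloRecurrentZ {A : Type*} (x : ℤ → A) : Prop :=
  ∀ w : List A, IsFactorZ x w → ∀ k : ℕ, 1 ≤ k → ∀ r : ℤ,
    ∃ i : ℤ, occursAt x w i ∧ (k : ℤ) ∣ (i - r)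

/-- A shift space: closed (product topology, `A` discrete) and shift-invariant. -/
def IsShiftSpace {A : Type*} (X : Set (ℤ → A)) : Prop :=
  @IsClosed _ (@Pi.topologicalSpace ℤ (fun _ => A) (fun _ => ⊥)) X ∧ shiftZ 1 '' X = X

def IsAttractorX {A : Type*} (X : Set (ℤ → A)) (Γ : Set ℤ) : Prop :=
  ∀ x ∈ X, IsAttractorZ x Γ

def MinimalShift {A : Type*} (X : Set (ℤ → A)) : Prop :=
  IsShiftSpace X ∧ ∀ Y ⊆ X, IsShiftSpace Y → Y = ∅ ∨ Y = X

/-- The orbit closure of a bi-infinite word (product topology, `A` discrete). -/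
def orbitClosureZ {A : Type*} (x : ℤ → A) : Set (ℤ → A) :=
  @closure _ (@Pi.topologicalSpace ℤ (fun _ => A) (fun _ => ⊥)) {y | ∃ k : ℤ, y = shiftZ k x}

/-!
Shifting moves attractors, and a one-point attractor forces a constant word, so for aperiodic `x`
the equation `span x = 1` says that some shift `y` of `x` has `{0, 1}` as a string attractor:
every factor of length `n` occurs at one of the `n + 1` positions `1 - n, …, 1`. An aperiodic word
has at least `n + 1` factors of length `n`, so this holds exactly when `y` is Sturmian and these
`n + 1` windows are pairwise distinct. Distinctness makes `y_{[-n,-1]}` right special and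
`y_{[2,n+1]}` left special, which is the characteristic property. Conversely, for a characteristic
word distinctness follows by induction on `n`: prefixes and suffixes settle every pair of windows
except the ones at `-n` and `1`. Their equality would give a run of period `n + 1` around the
origin; its maximal extension is a left special factor, so by uniqueness it reappears at
position `2`. This gives a second period on an interval long enough for Fine–Wilf, which then
extends the run past its end.
-/

section Subwords

variable {A : Type*} (x : ℤ → A)

-- The cast `(j : ℤ)` in `subwordZ` elaborates through the list monad; this is the plain `map`.
lemma subwordZ_eq_map (i : ℤ) (n : ℕ) :
    subwordZ x i n = (List.range n).map fun j : ℕ => x (i + j) := by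
  simp only [subwordZ, bind_pure_comp, List.map_eq_map, List.map_map]
  rfl

@[simp]
lemma length_subwordZ (i : ℤ) (n : ℕ) : (subwordZ x i n).length = n := by
  simp [subwordZ_eq_map]

lemma getElem?_subwordZ (i : ℤ) {n j : ℕ} (hj : j < n) :
    (subwordZ x i n)[j]? = some (x (i + j)) := by
  simp [subwordZ_eq_map, hj]

lemma subwordZ_eq_subwordZ_iff {i i' : ℤ} {n : ℕ} :
    subwordZ x i n = subwordZ x i' n ↔ ∀ j < n, x (i + j) = x (i' + j) := by
  simp [subwordZ_eq_map, List.ext_getElem_iff]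

lemma subwordZ_add (i : ℤ) (m n : ℕ) :
    subwordZ x i (m + n) = subwordZ x i m ++ subwordZ x (i + m) n := by
  simp [subwordZ_eq_map, List.range_add, add_assoc]

@[simp]
lemma subwordZ_zero (i : ℤ) : subwordZ x i 0 = [] := by
  simp [subwordZ_eq_map]

lemma subwordZ_succ (i : ℤ) (n : ℕ) : subwordZ x i (n + 1) = subwordZ x i n ++ [x (i + n)] := by
  rw [subwordZ_add]
  simp [subwordZ_eq_map]

lemma subwordZ_succ' (i : ℤ) (n : ℕ) : subwordZ x i (n + 1) = x i :: subwordZ x (i + 1) n := by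
  rw [add_comm n, subwordZ_add]
  simp [subwordZ_eq_map]

lemma dropLast_subwordZ (i : ℤ) (n : ℕ) : (subwordZ x i (n + 1)).dropLast = subwordZ x i n := by
  rw [subwordZ_succ, List.dropLast_concat]

lemma tail_subwordZ (i : ℤ) (n : ℕ) : (subwordZ x i (n + 1)).tail = subwordZ x (i + 1) n := by
  rw [subwordZ_succ', List.tail_cons]

lemma isFactorZ_subwordZ (i : ℤ) (n : ℕ) : IsFactorZ x (subwordZ x i n) :=
  ⟨i, by rw [occursAt, length_subwordZ]⟩

lemma complexityZ_eq_ncard (n : ℕ) : complexityZ x n = (Set.range (subwordZ x · n)).ncard := by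
  have : {w : List A | w.length = n ∧ IsFactorZ x w} = Set.range (subwordZ x · n) := by
    ext w
    constructor
    · rintro ⟨rfl, hw⟩
      exact hw
    · rintro ⟨i, rfl⟩
      exact ⟨length_subwordZ x i n, isFactorZ_subwordZ x i n⟩
  rw [complexityZ, ← this, ← Nat.card_coe_set_eq]
  rfl

lemma complexityZ_zero : complexityZ x 0 = 1 := by
  simp [complexityZ_eq_ncard]

lemma finite_range_subwordZ [Finite A] (n : ℕ) : (Set.range (subwordZ x · n)).Finite :=
  (List.finite_length_eq A n).subset (Set.range_subset_iff.2 (length_subwordZ x · n))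

lemma tail_image_range_subwordZ (n : ℕ) :
    List.tail '' Set.range (subwordZ x · (n + 1)) = Set.range (subwordZ x · n) := by
  rw [← Set.range_comp]
  ext w
  simp only [Set.mem_range, Function.comp_apply, tail_subwordZ]
  exact ⟨fun ⟨i, h⟩ => ⟨i + 1, h⟩, fun ⟨i, h⟩ => ⟨i - 1, by rwa [sub_add_cancel]⟩⟩

lemma dropLast_image_range_subwordZ (n : ℕ) :
    List.dropLast '' Set.range (subwordZ x · (n + 1)) = Set.range (subwordZ x · n) := by
  simp only [← Set.range_comp, Function.comp_def, dropLast_subwordZ]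

end Subwords

lemma mem_range_subwordZ_of_isFactorZ {A : Type*} {x : ℤ → A} {w : List A} {n : ℕ}
    (hw : IsFactorZ x w) (hn : w.length = n) : w ∈ Set.range (subwordZ x · n) :=
  hn ▸ hw

lemma Set.ncard_image_add_two_le {α β : Type*} {f : α → β} {s : Set α} (hs : s.Finite)
    {a a' c c' : α} (ha : a ∈ s) (ha' : a' ∈ s) (hc : c ∈ s) (hc' : c' ∈ s)
    (haa' : a ≠ a') (hcc' : c ≠ c') (hfa : f a = f a') (hfc : f c = f c') (hac : f a ≠ f c) :
    (f '' s).ncard + 2 ≤ s.ncard := by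
  have hpair : {a', c'} ⊆ s := Set.insert_subset ha' (Set.singleton_subset_iff.2 hc')
  have hne : a' ≠ c' := fun h => hac (by rw [hfa, hfc, h])
  have himage : f '' s ⊆ f '' (s \ {a', c'}) := by
    rintro _ ⟨z, hz, rfl⟩
    by_cases hza : z = a'
    · refine ⟨a, ⟨ha, ?_⟩, by rw [hfa, hza]⟩
      rintro (h | h)
      exacts [haa' h, hac (by rw [h, hfc])]
    by_cases hzc : z = c'
    · refine ⟨c, ⟨hc, ?_⟩, by rw [hfc, hzc]⟩
      rintro (h | h)
      exacts [hac (by rw [h, hfa]), hcc' h]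
    exact ⟨z, ⟨hz, by rintro (h | h) <;> contradiction⟩, rfl⟩
  have h2 : 2 ≤ s.ncard := Set.ncard_pair hne ▸ Set.ncard_le_ncard hpair hs
  have := calc (f '' s).ncard
      ≤ (f '' (s \ {a', c'})).ncard := Set.ncard_le_ncard himage (hs.sdiff.image f)
    _ ≤ (s \ {a', c'}).ncard := Set.ncard_image_le hs.sdiff
    _ = s.ncard - 2 := by rw [Set.ncard_sdiff hpair, Set.ncard_pair hne]
  omega

section Complexity

variable {A : Type*} [Finite A] {x : ℤ → A}

lemma leftSpecialZ_unique {m : ℕ} (hc : complexityZ x (m + 1) ≤ complexityZ x m + 1)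
    {u v : List A} (hu : u.length = m) (hv : v.length = m)
    (hLu : LeftSpecialZ x u) (hLv : LeftSpecialZ x v) : u = v := by
  by_contra huv
  obtain ⟨a, a', haa', ha, ha'⟩ := hLu
  obtain ⟨c, c', hcc', hc, hc'⟩ := hLv
  have key := Set.ncard_image_add_two_le (f := List.tail) (finite_range_subwordZ x (m + 1))
    (mem_range_subwordZ_of_isFactorZ ha (by simp [hu]))
    (mem_range_subwordZ_of_isFactorZ ha' (by simp [hu]))
    (mem_range_subwordZ_of_isFactorZ hc (by simp [hv]))
    (mem_range_subwordZ_of_isFactorZ hc' (by simp [hv]))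
    (by simpa using haa') (by simpa using hcc') rfl rfl huv
  rw [tail_image_range_subwordZ, ← complexityZ_eq_ncard, ← complexityZ_eq_ncard] at key
  omega

lemma subwordZ_succ_eq_of_complexityZ_succ_le {m : ℕ}
    (hc : complexityZ x (m + 1) ≤ complexityZ x m) {i j : ℤ}
    (h : subwordZ x i m = subwordZ x j m) : subwordZ x i (m + 1) = subwordZ x j (m + 1) := by
  have hfin := finite_range_subwordZ x (m + 1)
  have hinj : Set.InjOn List.dropLast (Set.range (subwordZ x · (m + 1))) := by
    refine Set.injOn_of_ncard_image_eq (le_antisymm (Set.ncard_image_le hfin) ?_) hfin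
    rwa [dropLast_image_range_subwordZ, ← complexityZ_eq_ncard, ← complexityZ_eq_ncard]
  exact hinj ⟨i, rfl⟩ ⟨j, rfl⟩ (by rwa [dropLast_subwordZ, dropLast_subwordZ])

lemma positivelyPeriodicZ_of_complexityZ_succ_le {m : ℕ}
    (hc : complexityZ x (m + 1) ≤ complexityZ x m) : PositivelyPeriodicZ x := by
  obtain ⟨a, -, b, -, hab, heq⟩ := Set.infinite_univ.exists_ne_map_eq_of_mapsTo
    (fun i _ => Set.mem_range_self i) (finite_range_subwordZ x m)
  wlog hlt : a < b generalizing a b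
  · exact this b a hab.symm heq.symm (by omega)
  have hprop : ∀ s : ℕ, subwordZ x (a + s) (m + 1) = subwordZ x (b + s) (m + 1) := by
    intro s
    induction s with
    | zero => simpa using subwordZ_succ_eq_of_complexityZ_succ_le hc heq
    | succ s ih =>
      refine subwordZ_succ_eq_of_complexityZ_succ_le hc ?_
      simpa [tail_subwordZ, add_assoc] using congrArg List.tail ih
  refine ⟨a, (b - a).toNat, by omega, fun t ht => ?_⟩
  have := (subwordZ_eq_subwordZ_iff x).1 (hprop (t - a).toNat) 0 (by omega)
  convert this using 2 <;> omega

lemma AperiodicZ.succ_le_complexityZ (hx : AperiodicZ x) (n : ℕ) : n + 1 ≤ complexityZ x n := by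
  by_contra! hn
  have : ∃ m, complexityZ x (m + 1) ≤ complexityZ x m := by
    by_contra! hinc
    have : ∀ k, k + 1 ≤ complexityZ x k := fun k => by
      induction k with
      | zero => simp [complexityZ_zero]
      | succ k ih => linarith [hinc k]
    linarith [this n]
  obtain ⟨m, hm⟩ := this
  exact hx (Or.inl (positivelyPeriodicZ_of_complexityZ_succ_le hm))

end Complexity

lemma exists_maximal_run_right {Q : ℤ → Prop} {lo hi : ℤ}
    (hrun : ∀ t, lo ≤ t → t ≤ hi → Q t) (hne : ¬ ∀ t, lo ≤ t → Q t) :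
    ∃ K : ℕ, (∀ t, lo ≤ t → t ≤ hi + K → Q t) ∧ ¬ Q (hi + K + 1) := by
  have hex : ∃ K : ℕ, ¬ Q (hi + K + 1) := by
    by_contra! h
    refine hne fun t ht => ?_
    by_cases hth : t ≤ hi
    · exact hrun t ht hth
    · have := h (t - hi - 1).toNat
      rwa [show hi + (t - hi - 1).toNat + 1 = t by omega] at this
  refine ⟨Nat.find hex, fun t ht htK => ?_, Nat.find_spec hex⟩
  by_cases hth : t ≤ hi
  · exact hrun t ht hth
  · have := Nat.find_min hex (m := (t - hi - 1).toNat) (by omega)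
    rwa [show hi + (t - hi - 1).toNat + 1 = t by omega, not_not] at this

lemma exists_maximal_run_left {Q : ℤ → Prop} {lo hi : ℤ}
    (hrun : ∀ t, lo ≤ t → t ≤ hi → Q t) (hne : ¬ ∀ t, t ≤ hi → Q t) :
    ∃ J : ℕ, (∀ t, lo - J ≤ t → t ≤ hi → Q t) ∧ ¬ Q (lo - J - 1) := by
  obtain ⟨J, hJ, hbreak⟩ := exists_maximal_run_right (Q := fun t => Q (-t)) (lo := -hi) (hi := -lo)
    (fun t h1 h2 => hrun (-t) (by omega) (by omega))
    (fun h => hne fun t ht => by simpa using h (-t) (by omega))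
  refine ⟨J, fun t h1 h2 => by simpa using hJ (-t) (by omega) (by omega), ?_⟩
  convert hbreak using 2
  ring

section Runs

variable {A : Type*} {y : ℤ → A}

lemma AperiodicZ.exists_maximal_run (hy : AperiodicZ y) {P : ℕ} (hP : 0 < P) {lo hi : ℤ}
    (hle : lo ≤ hi) (hrun : ∀ t, lo ≤ t → t ≤ hi → y t = y (t + P)) :
    ∃ J K : ℕ, (∀ t, lo - J ≤ t → t ≤ hi + K → y t = y (t + P)) ∧
      y (lo - J - 1) ≠ y (lo - J - 1 + P) ∧ y (hi + K + 1) ≠ y (hi + K + 1 + P) := by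
  obtain ⟨K, hK, hR⟩ := exists_maximal_run_right hrun fun h => hy (Or.inl ⟨lo, P, hP, h⟩)
  obtain ⟨J, hJ, hL⟩ := exists_maximal_run_left hrun fun h =>
    hy (Or.inr ⟨hi + P, P, hP, fun t ht => by simpa using (h (t - P) (by omega)).symm⟩)
  refine ⟨J, K, fun t h1 h2 => ?_, hL, hR⟩
  by_cases hth : t ≤ hi
  · exact hJ t h1 hth
  · exact hK t (by omega) h2

lemma leftSpecialZ_subwordZ_of_run {a : ℤ} {P N : ℕ}
    (hrun : ∀ j < N, y (a + j) = y (a + j + P)) (hbreak : y (a - 1) ≠ y (a - 1 + P)) :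
    LeftSpecialZ y (subwordZ y a N) := by
  have hshift : subwordZ y a N = subwordZ y (a + P) N := by
    rw [subwordZ_eq_subwordZ_iff]
    intro j hj
    rw [hrun j hj, add_right_comm]
  refine ⟨_, _, hbreak, ?_, ?_⟩
  · simpa [subwordZ_succ'] using isFactorZ_subwordZ y (a - 1) (N + 1)
  · simpa [subwordZ_succ', hshift, sub_add_eq_add_sub] using
      isFactorZ_subwordZ y (a - 1 + P) (N + 1)

lemma apply_eq_apply_of_two_periods {a : ℤ} {N p q : ℕ}
    (hp : ∀ j, j + p < N → y (a + j) = y (a + j + p))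
    (hq : ∀ j, j + q < N → y (a + j) = y (a + j + q))
    (hlen : p + q - p.gcd q ≤ N) {i i' : ℕ} (hi : i < N) (hi' : i' < N)
    (hii' : i ≡ i' [MOD p.gcd q]) : y (a + i) = y (a + i') := by
  have hper : ∀ r : ℕ, (∀ j, j + r < N → y (a + j) = y (a + j + r)) →
      (subwordZ y a N).HasPeriod r := by
    intro r hr
    rw [List.hasPeriod_iff_getElem?]
    intro j hj
    rw [length_subwordZ] at hj
    rw [getElem?_subwordZ y a (by omega), getElem?_subwordZ y a (by omega), hr j (by omega)]
    push_cast
    ring_nf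
  have hg := (hper p hp).gcd (hper q hq) (by simpa using hlen)
  have := (hg.getElem?_mod _ i _ (by simpa using hi)).symm.trans
    (hii' ▸ hg.getElem?_mod _ i' _ (by simpa using hi'))
  rw [getElem?_subwordZ y a hi, getElem?_subwordZ y a hi'] at this
  exact Option.some_injective _ this

-- On `[1 - J, K + n + 1]` the run has period `n + 1` and, through the occurrence at `2`, also
-- period `J + 1`; Fine–Wilf then makes `y (K + 1)` agree with `y (K + 1 + (n + 1))`.
lemma apply_eq_apply_add_of_run {n J K : ℕ}
    (hrun : ∀ t : ℤ, -(n : ℤ) - J ≤ t → t ≤ K → y t = y (t + (n + 1)))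
    (hW : subwordZ y (-(n : ℤ) - J) (n + J + K + 1) = subwordZ y 2 (n + J + K + 1)) :
    y (K + 1) = y (K + 1 + (n + 1)) := by
  have hP : ∀ j, j + (n + 1) < n + J + K + 1 →
      y (1 - J + j) = y (1 - J + j + (n + 1 : ℕ)) := fun j hj => by
    push_cast
    exact hrun _ (by omega) (by omega)
  have hQ : ∀ j < n + J + K + 1, y (1 - J + j) = y (1 - J + j + (J + 1 : ℕ)) := fun j hj => by
    have h1 := hrun (-(n : ℤ) - J + j) (by omega) (by omega)
    have h2 := (subwordZ_eq_subwordZ_iff y).1 hW j hj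
    rw [show (1 : ℤ) - J + j = -n - J + j + (n + 1) by ring, ← h1, h2]
    congr 1
    push_cast
    ring
  have hmod : K + J ≡ K + n [MOD (n + 1).gcd (J + 1)] := by
    have hcd : n + 1 ≡ J + 1 [MOD (n + 1).gcd (J + 1)] :=
      (Nat.modEq_zero_iff_dvd.2 (Nat.gcd_dvd_left _ _)).trans
        (Nat.modEq_zero_iff_dvd.2 (Nat.gcd_dvd_right _ _)).symm
    refine Nat.ModEq.add_right_cancel hcd ?_
    rw [show K + J + (n + 1) = K + n + (J + 1) by ring]
  have hg : 0 < (n + 1).gcd (J + 1) := Nat.gcd_pos_of_pos_left _ (by omega)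
  have key := apply_eq_apply_of_two_periods hP (fun j hj => hQ j (by omega)) (by omega)
    (by omega) (by omega) hmod
  calc y (K + 1) = y (1 - J + (K + J : ℕ)) := by push_cast; ring_nf
    _ = y (1 - J + (K + n : ℕ) + (J + 1 : ℕ)) := key.trans (hQ _ (by omega))
    _ = y (K + 1 + (n + 1)) := by push_cast; ring_nf

lemma subwordZ_neg_ne_subwordZ_one [Finite A] (hy : AperiodicZ y)
    (hc : ∀ m, complexityZ y (m + 1) ≤ complexityZ y m + 1)
    (hLS : ∀ m, LeftSpecialZ y (subwordZ y 2 m)) (n : ℕ) :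
    subwordZ y (-n) (n + 1) ≠ subwordZ y 1 (n + 1) := by
  intro h
  have hrun₀ : ∀ t, -(n : ℤ) ≤ t → t ≤ 0 → y t = y (t + (n + 1 : ℕ)) := fun t h1 h2 => by
    convert (subwordZ_eq_subwordZ_iff y).1 h (t + n).toNat (by omega) using 2 <;> push_cast <;> omega
  obtain ⟨J, K, hrun, hL, hR⟩ := hy.exists_maximal_run (by omega) (by omega) hrun₀
  push_cast [zero_add] at hrun hL hR
  have hLSrun : LeftSpecialZ y (subwordZ y (-n - J) (n + J + K + 1)) :=
    leftSpecialZ_subwordZ_of_run (P := n + 1) (fun j hj => by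
      push_cast
      exact hrun _ (by omega) (by omega)) (by push_cast; simpa using hL)
  have hW := leftSpecialZ_unique (hc _) (length_subwordZ ..) (length_subwordZ ..) hLSrun (hLS _)
  exact hR (by simpa using apply_eq_apply_add_of_run hrun hW)

lemma injOn_subwordZ_Icc (hne : ∀ n : ℕ, subwordZ y (-n) (n + 1) ≠ subwordZ y 1 (n + 1))
    (n : ℕ) : Set.InjOn (subwordZ y · n) (Set.Icc (1 - n) 1) := by
  induction n with
  | zero =>
    intro a ha b hb _
    simp only [Set.mem_Icc, Nat.cast_zero] at ha hb
    omega
  | succ n ih =>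
    intro a ha b hb h
    simp only [Set.mem_Icc, Nat.cast_succ] at ha hb
    by_contra hab
    wlog hlt : a < b generalizing a b
    · exact this h.symm hb ha (Ne.symm hab) (by omega)
    have hpre : subwordZ y a n = subwordZ y b n := by
      simpa [dropLast_subwordZ] using congrArg List.dropLast h
    have hsuf : subwordZ y (a + 1) n = subwordZ y (b + 1) n := by
      simpa [tail_subwordZ] using congrArg List.tail h
    rcases (by omega : 1 - (n : ℤ) ≤ a ∨ b ≤ 0 ∨ (a = -n ∧ b = 1)) with h1 | h1 | ⟨rfl, rfl⟩
    · exact hab (ih ⟨h1, by omega⟩ ⟨by omega, by omega⟩ hpre)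
    · have := ih ⟨by omega, by omega⟩ ⟨by omega, by omega⟩ hsuf
      omega
    · exact hne n h

end Runs

section ZeroOneAttractor

variable {A : Type*} {y : ℤ → A}

lemma ncard_Icc_one_sub (n : ℕ) : (Set.Icc (1 - n : ℤ) 1).ncard = n + 1 := by
  rw [← Finset.coe_Icc, Set.ncard_coe_finset, Int.card_Icc]
  omega

lemma range_subwordZ_eq_image_Icc_iff_injOn {n : ℕ} (hc : complexityZ y n = n + 1) :
    Set.range (subwordZ y · n) = (subwordZ y · n) '' Set.Icc (1 - n) 1 ↔
      Set.InjOn (subwordZ y · n) (Set.Icc (1 - n) 1) := by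
  have hR : (Set.range (subwordZ y · n)).ncard = n + 1 := by rw [← complexityZ_eq_ncard, hc]
  constructor
  · intro h
    exact Set.injOn_of_ncard_image_eq (by rw [← h, hR, ncard_Icc_one_sub])
  · intro h
    refine (Set.eq_of_subset_of_ncard_le (Set.image_subset_range _ _) ?_
      (Set.finite_of_ncard_ne_zero (by omega))).symm
    rw [hR, h.ncard_image, ncard_Icc_one_sub]

lemma isAttractorZ_zero_one_iff : IsAttractorZ y {0, 1} ↔
    ∀ n : ℕ, Set.range (subwordZ y · n) = (subwordZ y · n) '' Set.Icc (1 - n) 1 := by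
  constructor
  · intro hA n
    refine (Set.image_subset_range _ _).antisymm' ?_
    rintro _ ⟨i, rfl⟩
    rcases Nat.eq_zero_or_pos n with rfl | hn
    · exact ⟨1, by simp, by simp⟩
    obtain ⟨j, hj, p, hp, h1, h2⟩ := hA (subwordZ y i n)
      (List.ne_nil_of_length_pos (by simpa using hn)) (isFactorZ_subwordZ y i n)
    rw [occursAt, length_subwordZ] at hj
    rw [length_subwordZ] at h2
    rcases hp with rfl | rfl <;> exact ⟨j, ⟨by omega, by omega⟩, hj⟩
  · intro h w hw hf
    obtain ⟨j, ⟨hj1, hj2⟩, hjw⟩ : w ∈ (subwordZ y · w.length) '' Set.Icc (1 - w.length) 1 :=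
      h w.length ▸ hf
    have hlen : 0 < w.length := List.length_pos_of_ne_nil hw
    refine ⟨j, hjw, ?_⟩
    by_cases hj : j ≤ 0
    · exact ⟨0, by simp, hj, by omega⟩
    · exact ⟨1, by simp, by omega, by omega⟩

lemma rightSpecialZ_subwordZ_neg
    (hcov : ∀ n : ℕ, Set.range (subwordZ y · n) = (subwordZ y · n) '' Set.Icc (1 - n) 1)
    (hinj : ∀ n : ℕ, Set.InjOn (subwordZ y · n) (Set.Icc (1 - n) 1)) (m : ℕ) :
    RightSpecialZ y (subwordZ y (-m) m) := by
  obtain ⟨i, hi, hiw : subwordZ y i m = _⟩ :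
      subwordZ y (-m) m ∈ (subwordZ y · m) '' Set.Icc (1 - m) 1 := hcov m ▸ Set.mem_range_self _
  refine ⟨y 0, y (i + m), fun h => ?_, ?_, ?_⟩
  · have heq : subwordZ y (-m) (m + 1) = subwordZ y i (m + 1) := by
      rw [subwordZ_succ, subwordZ_succ, hiw, neg_add_cancel, h]
    have := hinj (m + 1) ⟨by push_cast; omega, by omega⟩
      ⟨by push_cast; linarith [hi.1], hi.2⟩ heq
    linarith [hi.1]
  · simpa [subwordZ_succ] using isFactorZ_subwordZ y (-m) (m + 1)
  · simpa [subwordZ_succ, hiw] using isFactorZ_subwordZ y i (m + 1)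

lemma leftSpecialZ_subwordZ_two
    (hcov : ∀ n : ℕ, Set.range (subwordZ y · n) = (subwordZ y · n) '' Set.Icc (1 - n) 1)
    (hinj : ∀ n : ℕ, Set.InjOn (subwordZ y · n) (Set.Icc (1 - n) 1)) (m : ℕ) :
    LeftSpecialZ y (subwordZ y 2 m) := by
  obtain ⟨i, hi, hiw : subwordZ y i m = _⟩ :
      subwordZ y 2 m ∈ (subwordZ y · m) '' Set.Icc (1 - m) 1 := hcov m ▸ Set.mem_range_self _
  refine ⟨y 1, y (i - 1), fun h => ?_, ?_, ?_⟩
  · have heq : subwordZ y 1 (m + 1) = subwordZ y (i - 1) (m + 1) := by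
      rw [subwordZ_succ', subwordZ_succ', sub_add_cancel, hiw, h, one_add_one_eq_two]
    have := hinj (m + 1) ⟨by push_cast; omega, le_rfl⟩
      ⟨by push_cast; linarith [hi.1], by linarith [hi.2]⟩ heq
    linarith [hi.2]
  · simpa [subwordZ_succ', one_add_one_eq_two] using isFactorZ_subwordZ y 1 (m + 1)
  · simpa [subwordZ_succ', hiw] using isFactorZ_subwordZ y (i - 1) (m + 1)

end ZeroOneAttractor

lemma subwordZ_neg_two_mul_add_two {A : Type*} (y : ℤ → A) (n : ℕ) :
    subwordZ y (-n) (2 * n + 2) = subwordZ y (-n) n ++ [y 0, y 1] ++ subwordZ y 2 n := by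
  rw [show 2 * n + 2 = n + 2 + n by ring, subwordZ_add, subwordZ_add, neg_add_cancel]
  simp [subwordZ_succ', one_add_one_eq_two]

section Characteristic

variable {y : ℤ → Fin 2}

lemma characteristicSturmian_of (hS : SturmianZ y)
    (hRS : ∀ m : ℕ, RightSpecialZ y (subwordZ y (-m) m))
    (hLS : ∀ m : ℕ, LeftSpecialZ y (subwordZ y 2 m)) (h01 : y 0 ≠ y 1) :
    CharacteristicSturmian y := by
  rcases (by omega : (y 0 = 0 ∧ y 1 = 1) ∨ (y 0 = 1 ∧ y 1 = 0)) with ⟨h0, h1⟩ | ⟨h0, h1⟩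
  · refine Or.inl ⟨hS, fun n => ⟨_, _, length_subwordZ .., hRS n, length_subwordZ .., hLS n, ?_⟩⟩
    rw [subwordZ_neg_two_mul_add_two, h0, h1]
  · refine Or.inr ⟨hS, fun n => ⟨_, _, length_subwordZ .., hRS n, length_subwordZ .., hLS n, ?_⟩⟩
    rw [subwordZ_neg_two_mul_add_two, h0, h1]

lemma CharacteristicSturmian.sturmianZ (h : CharacteristicSturmian y) : SturmianZ y := by
  rcases h with ⟨h, -⟩ | ⟨h, -⟩ <;> exact h

lemma CharacteristicSturmian.leftSpecialZ (h : CharacteristicSturmian y) (m : ℕ) :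
    LeftSpecialZ y (subwordZ y 2 m) := by
  have key : ∀ c : List (Fin 2), (∀ n : ℕ, ∃ r l : List (Fin 2), r.length = n ∧
      RightSpecialZ y r ∧ l.length = n ∧ LeftSpecialZ y l ∧
      subwordZ y (-(n : ℤ)) (2 * n + 2) = r ++ c ++ l) → LeftSpecialZ y (subwordZ y 2 m) := by
    intro c hall
    obtain ⟨r, l, -, -, hl, hLS, he⟩ := hall m
    rw [subwordZ_neg_two_mul_add_two] at he
    rwa [(List.append_inj' he (by simp [hl])).2]
  rcases h with ⟨-, hall⟩ | ⟨-, hall⟩ <;> exact key _ hall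

lemma AperiodicZ.characteristicSturmian_of_isAttractorZ (hy : AperiodicZ y)
    (hA : IsAttractorZ y {0, 1}) : CharacteristicSturmian y := by
  have hcov := isAttractorZ_zero_one_iff.1 hA
  have hc : ∀ n : ℕ, complexityZ y n = n + 1 := fun n => by
    refine le_antisymm ?_ (hy.succ_le_complexityZ n)
    rw [complexityZ_eq_ncard, hcov n, ← ncard_Icc_one_sub n]
    exact Set.ncard_image_le (Set.finite_Icc _ _)
  have hinj n := (range_subwordZ_eq_image_Icc_iff_injOn (hc n)).1 (hcov n)
  have h01 : y 0 ≠ y 1 := fun h => by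
    have := hinj 1 (by simp) (by simp) (show subwordZ y 0 1 = subwordZ y 1 1 by
      simp [subwordZ_succ, h])
    simp at this
  exact characteristicSturmian_of ⟨hy, hc⟩ (rightSpecialZ_subwordZ_neg hcov hinj)
    (leftSpecialZ_subwordZ_two hcov hinj) h01

lemma CharacteristicSturmian.isAttractorZ (h : CharacteristicSturmian y) :
    IsAttractorZ y {0, 1} := by
  obtain ⟨hy, hc⟩ := h.sturmianZ
  have hne := subwordZ_neg_ne_subwordZ_one hy (fun m => by rw [hc, hc]) h.leftSpecialZ
  exact isAttractorZ_zero_one_iff.2 fun n =>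
    (range_subwordZ_eq_image_Icc_iff_injOn (hc n)).2 (injOn_subwordZ_Icc hne n)

end Characteristic

section Span

variable {A : Type*} {x : ℤ → A}

lemma isAttractorZ_shiftZ_iff {k : ℤ} {Γ : Set ℤ} :
    IsAttractorZ (shiftZ k x) Γ ↔ IsAttractorZ x ((· + k) '' Γ) := by
  have hocc : ∀ w i, occursAt (shiftZ k x) w i ↔ occursAt x w (i + k) := fun w i => by
    simp only [occursAt, subwordZ_eq_map, shiftZ, add_right_comm]
  have hfac : ∀ w, IsFactorZ (shiftZ k x) w ↔ IsFactorZ x w := fun w =>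
    ⟨fun ⟨i, h⟩ => ⟨i + k, (hocc w i).1 h⟩,
      fun ⟨i, h⟩ => ⟨i - k, (hocc w _).2 (by rwa [sub_add_cancel])⟩⟩
  constructor
  · intro h w hw hf
    obtain ⟨i, hi, p, hp, h1, h2⟩ := h w hw ((hfac w).2 hf)
    exact ⟨i + k, (hocc w i).1 hi, p + k, ⟨p, hp, rfl⟩, by omega, by omega⟩
  · intro h w hw hf
    obtain ⟨i, hi, _, ⟨p, hp, rfl⟩, h1, h2⟩ := h w hw ((hfac w).1 hf)
    dsimp only at h1 h2
    exact ⟨i - k, (hocc w _).2 (by rwa [sub_add_cancel]), p, hp, by omega, by omega⟩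

lemma AperiodicZ.shiftZ (hx : AperiodicZ x) (k : ℤ) : AperiodicZ (shiftZ k x) := by
  rintro (⟨N, p, hp, h⟩ | ⟨N, p, hp, h⟩)
  · refine hx (Or.inl ⟨N + k, p, hp, fun n hn => ?_⟩)
    simpa [_root_.shiftZ, add_right_comm _ (p : ℤ)] using h (n - k) (by omega)
  · refine hx (Or.inr ⟨N + k, p, hp, fun n hn => ?_⟩)
    simpa [_root_.shiftZ, sub_add_eq_add_sub, sub_right_comm _ (p : ℤ)] using h (n - k) (by omega)

lemma IsAttractorZ.mono {Γ Γ' : Set ℤ} (h : IsAttractorZ x Γ) (hsub : Γ ⊆ Γ') :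
    IsAttractorZ x Γ' := fun w hw hf => by
  obtain ⟨i, hi, p, hp, h1, h2⟩ := h w hw hf
  exact ⟨i, hi, p, hsub hp, h1, h2⟩

lemma IsAttractorZ.nonempty {Γ : Set ℤ} (h : IsAttractorZ x Γ) : Γ.Nonempty := by
  obtain ⟨-, -, p, hp, -⟩ := h (subwordZ x 0 1) (by simp [subwordZ_succ])
    (isFactorZ_subwordZ x 0 1)
  exact ⟨p, hp⟩

lemma IsAttractorZ.positivelyPeriodicZ_of_singleton {p : ℤ} (h : IsAttractorZ x {p}) :
    PositivelyPeriodicZ x := by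
  have hconst : ∀ t, x t = x p := fun t => by
    obtain ⟨i, hi, q, hq, h1, h2⟩ := h (subwordZ x t 1) (by simp [subwordZ_succ])
      (isFactorZ_subwordZ x t 1)
    rw [Set.mem_singleton_iff] at hq
    rw [occursAt, length_subwordZ, show i = p by simp at h2; omega] at hi
    simpa [subwordZ_succ] using hi.symm
  exact ⟨0, 1, le_rfl, fun n _ => (hconst n).trans (hconst _).symm⟩

lemma setSpan_le_iff {Γ : Set ℤ} {d : ℕ} : setSpan Γ ≤ d ↔ ∀ a ∈ Γ, ∀ b ∈ Γ, b - a ≤ d := by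
  simp only [setSpan, iSup₂_le_iff, Nat.cast_le, Int.toNat_le]

lemma exists_subset_Icc_of_setSpan_le {Γ : Set ℤ} {d : ℕ} (hne : Γ.Nonempty)
    (h : setSpan Γ ≤ d) : ∃ p, Γ ⊆ Set.Icc p (p + d) := by
  obtain ⟨a, ha⟩ := hne
  rw [setSpan_le_iff] at h
  obtain ⟨p, hp, hmin⟩ := Int.exists_least_of_bdd ⟨a - d, fun b hb => by linarith [h b hb a ha]⟩
    ⟨a, ha⟩
  exact ⟨p, fun b hb => ⟨hmin b hb, by linarith [h p hp b hb]⟩⟩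

lemma AperiodicZ.one_le_wordSpan (hx : AperiodicZ x) : 1 ≤ wordSpan x := by
  refine le_iInf₂ fun Γ hΓ => Order.one_le_iff_ne_zero.2 fun h0 => ?_
  obtain ⟨p, hp⟩ := exists_subset_Icc_of_setSpan_le (d := 0) hΓ.nonempty (by simp [h0])
  exact hx (Or.inl (hΓ.mono (by simpa using hp)).positivelyPeriodicZ_of_singleton)

lemma AperiodicZ.wordSpan_eq_one_iff (hx : AperiodicZ x) :
    wordSpan x = 1 ↔ ∃ p : ℤ, IsAttractorZ x {p, p + 1} := by
  constructor
  · intro h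
    obtain ⟨Γ, hΓ, hlt⟩ : ∃ Γ, ∃ _ : IsAttractorZ x Γ, setSpan Γ < 1 + 1 := by
      simpa only [wordSpan, iInf_lt_iff, Set.mem_ofPred_eq] using
        h.trans_lt (by norm_num : (1 : ℕ∞) < 1 + 1)
    obtain ⟨p, hp⟩ := exists_subset_Icc_of_setSpan_le (d := 1) hΓ.nonempty
      (by exact_mod_cast Order.le_of_lt_add_one hlt)
    refine ⟨p, hΓ.mono fun b hb => ?_⟩
    have := hp hb
    simp only [Set.mem_Icc, Nat.cast_one] at this
    simp only [Set.mem_insert_iff, Set.mem_singleton_iff]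
    omega
  · rintro ⟨p, hp⟩
    refine le_antisymm ((iInf₂_le _ hp).trans (setSpan_le_iff.2 ?_)) hx.one_le_wordSpan
    simp only [Set.mem_insert_iff, Set.mem_singleton_iff]
    omega

end Span

/-- An aperiodic bi-infinite word over `{0,1}` has span `1` iff some shift
of it is a characteristic Sturmian word. -/
theorem span_one_iff_characteristic (x : ℤ → Fin 2) (hx : AperiodicZ x) :
    wordSpan x = 1 ↔ ∃ k : ℤ, CharacteristicSturmian (shiftZ k x) := by
  have hshift : ∀ k : ℤ, IsAttractorZ (shiftZ k x) {0, 1} ↔ IsAttractorZ x {k, k + 1} := by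
    intro k
    rw [isAttractorZ_shiftZ_iff, Set.image_pair, zero_add, add_comm 1 k]
  rw [hx.wordSpan_eq_one_iff]
  constructor
  · rintro ⟨k, hk⟩
    exact ⟨k, (hx.shiftZ k).characteristicSturmian_of_isAttractorZ ((hshift k).2 hk)⟩
  · rintro ⟨k, hk⟩
    exact ⟨k, (hshift k).1 hk.isAttractorZ⟩
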